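/- arXiv:1704.00938 — 7 statements merged into one kernel-verified Lean document; each statement's English description precedes it below -/
import Mathlib

section
/- Let a be an additive functional of an SDS φ. For y ∈ E define 𝒳a(y) to be the right derivative of t ↦ a(y, t) at t = 0 (the derivative at 0 within [0,∞)) if it exists, and 0 otherwise. Fix x ∈ E and suppose a(x,·) is absolutely continuous on [0, c(x)) in the sense that there exists a locally integrable function g : [0,∞) → ℝ with a(x, t) = ∫₀ᵗ g(s) ds for all t < c(x). Then a(x, t) = ∫₀ᵗ 𝒳a(φ(s, x)) ds for all t < c(x). -/
/-!
By additivity, `a (φ s x) u = a x (s + u) - a x s` for small `u ≥ 0`, so `𝒳a (φ s x)` is the right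
derivative of `a x` at `s` whenever the latter exists. By the Lebesgue differentiation theorem,
`a x = ∫₀ g` is differentiable with derivative `g s` at almost every `s`, so the integrands
`g` and `s ↦ 𝒳a (φ s x)` agree almost everywhere on `[0, t]`.
-/

open MeasureTheory Filter Topology

/-- A semi-dynamic system (SDS) on `E` with killing time `c : E → (0, ∞]`. -/
def IsSDS {E : Type*} [MeasurableSpace E] (φ : ℝ → E → E) (c : E → EReal) : Prop :=
  Measurable (fun p : ℝ × E => φ p.1 p.2) ∧
  (∀ x, 0 < c x) ∧
  (∀ x, φ 0 x = x) ∧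
  (∀ (x : E) (s t : ℝ), 0 ≤ s → 0 ≤ t → ((s + t : ℝ) : EReal) < c x →
    φ t (φ s x) = φ (s + t) x) ∧
  (∀ (x : E) (t : ℝ), 0 ≤ t → (t : EReal) < c x → c (φ t x) = c x - (t : EReal))

/-- An additive functional of the SDS `φ`: measurable, right-continuous in time on
`[0, c(x))`, vanishing at `0`, and additive along the flow. -/
def IsAdditiveFunctional {E : Type*} [MeasurableSpace E]
    (φ : ℝ → E → E) (c : E → EReal) (a : E → ℝ → ℝ) : Prop :=
  Measurable (fun p : E × ℝ => a p.1 p.2) ∧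
  (∀ (x : E) (t : ℝ), 0 ≤ t → (t : EReal) < c x →
    ContinuousWithinAt (a x) (Set.Ici t) t) ∧
  (∀ x, a x 0 = 0) ∧
  (∀ (x : E) (s t : ℝ), 0 ≤ s → 0 ≤ t → ((s + t : ℝ) : EReal) < c x →
    a x s + a (φ s x) t = a x (s + t))

open Set

section RightDerivative

variable {F : Type*} [NormedAddCommGroup F] [NormedSpace ℝ F]

theorem HasDerivWithinAt.comp_const_add_Ici {f : ℝ → F} {f' : F} {s : ℝ}
    (hf : HasDerivWithinAt f f' (Ici s) s) :
    HasDerivWithinAt (fun u => f (s + u)) f' (Ici 0) 0 := by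
  have htrans : HasDerivWithinAt (fun u : ℝ => s + u) 1 (Ici 0) 0 :=
    ((hasDerivAt_id 0).const_add s).hasDerivWithinAt
  simpa [Function.comp_def] using
    hf.scomp_of_eq 0 htrans (fun u (hu : 0 ≤ u) => by simpa using hu) (by simp)

theorem IsAdditiveFunctional.hasDerivWithinAt_flow {E : Type*} [MeasurableSpace E]
    {φ : ℝ → E → E} {c : E → EReal} {a : E → ℝ → ℝ} (ha : IsAdditiveFunctional φ c a)
    {x : E} {s d : ℝ} (hs : 0 ≤ s) (hsc : (s : EReal) < c x)
    (hd : HasDerivWithinAt (a x) d (Ici s) s) :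
    HasDerivWithinAt (a (φ s x)) d (Ici 0) 0 := by
  obtain ⟨-, -, ha0, hadd⟩ := ha
  obtain ⟨r, hsr, hrc⟩ := EReal.lt_iff_exists_real_btwn.1 hsc
  have hshift : ∀ᶠ u in 𝓝[Ici 0] 0, a (φ s x) u = a x (s + u) - a x s := by
    filter_upwards [Ico_mem_nhdsGE (sub_pos.2 (EReal.coe_lt_coe_iff.1 hsr))] with u hu
    have hsuc : ((s + u : ℝ) : EReal) < c x :=
      (EReal.coe_le_coe_iff.2 (by linarith [hu.2])).trans_lt hrc
    linarith [hadd x s u hs hu.1 hsuc]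
  exact (hd.comp_const_add_Ici.sub_const (a x s)).congr_of_eventuallyEq hshift (by simp [ha0])

theorem ae_hasDerivWithinAt_Ici_of_eqOn_integral [CompleteSpace F] {f g : ℝ → F} {T : ℝ}
    (hg : IntervalIntegrable g volume 0 T) (hf : EqOn f (fun u => ∫ s in 0..u, g s) (Icc 0 T)) :
    ∀ᵐ s, s ∈ Ico 0 T → HasDerivWithinAt f (g s) (Ici s) s := by
  filter_upwards [hg.ae_hasDerivAt_integral] with s hs hsT
  have hsT' : s ∈ uIcc 0 T := by
    rw [uIcc_of_le (hsT.1.trans hsT.2.le)]; exact Ico_subset_Icc_self hsT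
  have hfs : f =ᶠ[𝓝[Ici s] s] fun u => ∫ s in 0..u, g s := by
    filter_upwards [Ico_mem_nhdsGE hsT.2] with u hu
    exact hf ⟨hsT.1.trans hu.1, hu.2.le⟩
  exact ((hs hsT' 0 left_mem_uIcc).hasDerivWithinAt).congr_of_eventuallyEq hfs
    (hf (Ico_subset_Icc_self hsT))

end RightDerivative

theorem stmt_7_general {E : Type*} [MeasurableSpace E]
    (φ : ℝ → E → E) (c : E → EReal)
    (a : E → ℝ → ℝ) (ha : IsAdditiveFunctional φ c a)
    (Xa : E → ℝ)
    (hXa : ∀ y : E, (∃ d : ℝ, HasDerivWithinAt (a y) d (Set.Ici (0 : ℝ)) 0) →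
      HasDerivWithinAt (a y) (Xa y) (Set.Ici (0 : ℝ)) 0)
    (x : E) (g : ℝ → ℝ)
    (hg : ∀ t : ℝ, 0 ≤ t → (t : EReal) < c x → IntervalIntegrable g volume 0 t)
    (hag : ∀ t : ℝ, 0 ≤ t → (t : EReal) < c x → a x t = ∫ s in (0 : ℝ)..t, g s) :
    ∀ t : ℝ, 0 ≤ t → (t : EReal) < c x →
      a x t = ∫ s in (0 : ℝ)..t, Xa (φ s x) := by
  intro t ht htc
  obtain ⟨T, htT, hTc⟩ := EReal.lt_iff_exists_real_btwn.1 htc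
  have htT : t < T := EReal.coe_lt_coe_iff.1 htT
  have hT : 0 ≤ T := ht.trans htT.le
  have hagT : EqOn (a x) (fun u => ∫ s in 0..u, g s) (Icc 0 T) := fun u hu =>
    hag u hu.1 ((EReal.coe_le_coe_iff.2 hu.2).trans_lt hTc)
  rw [hag t ht htc]
  refine intervalIntegral.integral_congr_ae ?_
  filter_upwards [ae_hasDerivWithinAt_Ici_of_eqOn_integral (hg T hT hTc) hagT] with s hs hst
  rw [uIoc_of_le ht] at hst
  have hsT : s < T := hst.2.trans_lt htT
  have hd := ha.hasDerivWithinAt_flow hst.1.le ((EReal.coe_lt_coe_iff.2 hsT).trans hTc)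
    (hs ⟨hst.1.le, hsT⟩)
  -- `Xa` is pinned down only where the right derivative exists, and there it is unique.
  exact (uniqueDiffWithinAt_Ici 0).eq_deriv _ hd (hXa _ ⟨_, hd⟩)

theorem stmt_7 {E : Type*} [MeasurableSpace E]
    (φ : ℝ → E → E) (c : E → EReal) (hSDS : IsSDS φ c)
    (a : E → ℝ → ℝ) (ha : IsAdditiveFunctional φ c a)
    (Xa : E → ℝ)
    (hXa : ∀ y : E, (∃ d : ℝ, HasDerivWithinAt (a y) d (Set.Ici (0 : ℝ)) 0) →
      HasDerivWithinAt (a y) (Xa y) (Set.Ici (0 : ℝ)) 0)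
    (hXa0 : ∀ y : E, ¬ (∃ d : ℝ, HasDerivWithinAt (a y) d (Set.Ici (0 : ℝ)) 0) →
      Xa y = 0)
    (x : E) (g : ℝ → ℝ)
    (hg : ∀ t : ℝ, 0 ≤ t → (t : EReal) < c x → IntervalIntegrable g volume 0 t)
    (hag : ∀ t : ℝ, 0 ≤ t → (t : EReal) < c x → a x t = ∫ s in (0 : ℝ)..t, g s) :
    ∀ t : ℝ, 0 ≤ t → (t : EReal) < c x →
      a x t = ∫ s in (0 : ℝ)..t, Xa (φ s x) :=
  stmt_7_general φ c a ha Xa hXa x g hg hag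
end

section
/- Let a be an additive functional of an SDS φ. Let x₁, x₂ ∈ E and t₁, t₂ with 0 < t₁ < c(x₁) and 0 < t₂ < c(x₂), and suppose there exists t₀ ∈ (0, min(t₁, t₂)) such that z := φ(t₁ − t₀, x₁) = φ(t₂ − t₀, x₂). If the left limit a(z, t₀−) := lim_{u↑t₀} a(z, u) exists, then the left limits a(x₁, t₁−) and a(x₂, t₂−) exist and a(x₁, t₁) − a(x₁, t₁−) = a(x₂, t₂) − a(x₂, t₂−). -/
open MeasureTheory Filter Topology

namespace IsAdditiveFunctional

variable {E : Type*} [MeasurableSpace E] {φ : ℝ → E → E} {c : E → EReal} {a : E → ℝ → ℝ}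

theorem add_flow (ha : IsAdditiveFunctional φ c a) {x : E} {s t : ℝ} (hs : 0 ≤ s) (ht : 0 ≤ t)
    (hc : ((s + t : ℝ) : EReal) < c x) : a x s + a (φ s x) t = a x (s + t) :=
  ha.2.2.2 x s t hs ht hc

theorem tendsto_nhdsLT_of_tendsto_nhdsLT_flow (ha : IsAdditiveFunctional φ c a) {x : E}
    {s t L : ℝ} (hs : 0 ≤ s) (ht : 0 < t) (hc : ((s + t : ℝ) : EReal) < c x)
    (hL : Tendsto (a (φ s x)) (𝓝[<] t) (𝓝 L)) :
    Tendsto (a x) (𝓝[<] (s + t)) (𝓝 (a x s + L)) := by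
  have hshift : Tendsto (· - s) (𝓝[<] (s + t)) (𝓝[<] t) := by
    have := (continuous_sub_right s).continuousWithinAt.tendsto_nhdsWithin
      (x := s + t) (t := Set.Iio t) fun u (hu : u < s + t) => show u - s < t by linarith
    rwa [add_sub_cancel_left] at this
  have hadd : ∀ᶠ u in 𝓝[<] (s + t), a x s + a (φ s x) (u - s) = a x u := by
    filter_upwards [Ioo_mem_nhdsLT (show s < s + t by linarith)] with u hu
    have hcu : ((s + (u - s) : ℝ) : EReal) < c x := by
      rw [add_sub_cancel]
      exact lt_trans (EReal.coe_lt_coe_iff.2 hu.2) hc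
    simpa only [add_sub_cancel] using ha.add_flow hs (by linarith [hu.1]) hcu
  exact (tendsto_const_nhds.add (hL.comp hshift)).congr' hadd

theorem tendsto_nhdsLT_and_sub_eq (ha : IsAdditiveFunctional φ c a) {x : E} {t t₀ L : ℝ}
    (ht₀ : 0 < t₀) (ht : t₀ < t) (hc : (t : EReal) < c x)
    (hL : Tendsto (a (φ (t - t₀) x)) (𝓝[<] t₀) (𝓝 L)) :
    Tendsto (a x) (𝓝[<] t) (𝓝 (a x (t - t₀) + L)) ∧
      a x t - (a x (t - t₀) + L) = a (φ (t - t₀) x) t₀ - L := by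
  have hs : 0 ≤ t - t₀ := by linarith
  have hc' : ((t - t₀ + t₀ : ℝ) : EReal) < c x := by rwa [sub_add_cancel]
  refine ⟨by simpa only [sub_add_cancel] using
    ha.tendsto_nhdsLT_of_tendsto_nhdsLT_flow hs ht₀ hc' hL, ?_⟩
  rw [← sub_add_cancel t t₀, ← ha.add_flow hs ht₀.le hc', add_sub_cancel_right]
  ring

end IsAdditiveFunctional

theorem stmt_8_general {E : Type*} [MeasurableSpace E]
    (φ : ℝ → E → E) (c : E → EReal)
    (a : E → ℝ → ℝ) (ha : IsAdditiveFunctional φ c a)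
    (x₁ x₂ : E) (t₁ t₂ : ℝ)
    (ht₁c : (t₁ : EReal) < c x₁)
    (ht₂c : (t₂ : EReal) < c x₂)
    (t₀ : ℝ) (ht₀ : 0 < t₀) (ht₀' : t₀ < min t₁ t₂)
    (hmeet : φ (t₁ - t₀) x₁ = φ (t₂ - t₀) x₂)
    (hlim : ∃ L : ℝ, Tendsto (a (φ (t₁ - t₀) x₁)) (𝓝[<] t₀) (𝓝 L)) :
    ∃ L₁ L₂ : ℝ, Tendsto (a x₁) (𝓝[<] t₁) (𝓝 L₁) ∧
      Tendsto (a x₂) (𝓝[<] t₂) (𝓝 L₂) ∧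
      a x₁ t₁ - L₁ = a x₂ t₂ - L₂ := by
  obtain ⟨L, hL⟩ := hlim
  -- Both jumps equal the jump at time `t₀` of the common point `φ (t₁ - t₀) x₁ = φ (t₂ - t₀) x₂`.
  obtain ⟨hT₁, hJ₁⟩ := ha.tendsto_nhdsLT_and_sub_eq ht₀ (ht₀'.trans_le (min_le_left _ _)) ht₁c hL
  rw [hmeet] at hL
  obtain ⟨hT₂, hJ₂⟩ := ha.tendsto_nhdsLT_and_sub_eq ht₀ (ht₀'.trans_le (min_le_right _ _)) ht₂c hL
  exact ⟨_, _, hT₁, hT₂, by rw [hJ₁, hJ₂, hmeet]⟩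

theorem stmt_8 {E : Type*} [MeasurableSpace E]
    (φ : ℝ → E → E) (c : E → EReal) (hSDS : IsSDS φ c)
    (a : E → ℝ → ℝ) (ha : IsAdditiveFunctional φ c a)
    (x₁ x₂ : E) (t₁ t₂ : ℝ)
    (ht₁ : 0 < t₁) (ht₁c : (t₁ : EReal) < c x₁)
    (ht₂ : 0 < t₂) (ht₂c : (t₂ : EReal) < c x₂)
    (t₀ : ℝ) (ht₀ : 0 < t₀) (ht₀' : t₀ < min t₁ t₂)
    (hmeet : φ (t₁ - t₀) x₁ = φ (t₂ - t₀) x₂)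
    (hlim : ∃ L : ℝ, Tendsto (a (φ (t₁ - t₀) x₁)) (𝓝[<] t₀) (𝓝 L)) :
    ∃ L₁ L₂ : ℝ, Tendsto (a x₁) (𝓝[<] t₁) (𝓝 L₁) ∧
      Tendsto (a x₂) (𝓝[<] t₂) (𝓝 L₂) ∧
      a x₁ t₁ - L₁ = a x₂ t₂ - L₂ :=
  stmt_8_general φ c a ha x₁ x₂ t₁ t₂ ht₁c ht₂c t₀ ht₀ ht₀' hmeet hlim
end

section
/- Let φ be an SDS on E with killing time c and let g : E → ℝ be a measurable function which is locally absolutely path-summable, i.e. for every x ∈ E and t < c(x), the family (g(φ(s, x)))_{s ∈ (0,t]} is (absolutely) summable. Define a(x, t) := ∑'_{s ∈ (0,t]} g(φ(s, x)) (the tsum over the subtype (0,t]) for x ∈ E and t < c(x). Then a(x, 0) = 0 and a(x, s) + a(φ(s, x), t) = a(x, s + t) whenever s + t < c(x). -/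
open MeasureTheory Filter Topology

/-
The increment of `a x` over `(s, s + t]` is a sum of `g` along the path from `x` between
times `s` and `s + t`; by the flow property `φ u (φ s x) = φ (s + u) x`, this is `a (φ s x) t`
after the shift `u ↦ s + u`. Additivity is then the splitting `(0, s + t] = (0, s] ⊔ (s, s + t]`
of an unconditionally summable family.
-/

theorem tsum_Ioc_add_tsum_Ioc {ι α : Type*} [LinearOrder ι] [AddCommGroup α] [UniformSpace α]
    [IsUniformAddGroup α] [CompleteSpace α] [T2Space α] {f : ι → α} {a b c : ι}
    (hab : a ≤ b) (hbc : b ≤ c) (hf : Summable fun x : Set.Ioc a c => f x) :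
    ∑' x : Set.Ioc a b, f x + ∑' x : Set.Ioc b c, f x = ∑' x : Set.Ioc a c, f x := by
  have restrict : ∀ {s : Set ι}, s ⊆ Set.Ioc a c → Summable fun x : s => f x := fun hs =>
    hf.comp_injective (Set.inclusion_injective hs)
  rw [← Set.Ioc_union_Ioc_eq_Ioc hab hbc]
  exact (Summable.tsum_union_disjoint (Set.Ioc_disjoint_Ioc_of_le le_rfl)
    (restrict (Set.Ioc_subset_Ioc_right hbc)) (restrict (Set.Ioc_subset_Ioc_left hab))).symm

theorem tsum_Ioc_comp_const_add {M α : Type*} [AddCommMonoid M] [PartialOrder M]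
    [IsOrderedCancelAddMonoid M] [ExistsAddOfLE M] [AddCommMonoid α] [TopologicalSpace α]
    (f : M → α) (s a b : M) :
    ∑' u : Set.Ioc a b, f (s + u) = ∑' v : Set.Ioc (s + a) (s + b), f v := by
  rw [← Set.image_const_add_Ioc, tsum_image f (add_right_injective s).injOn]

theorem IsSDS.map_map_of_mem_Ioc {E : Type*} [MeasurableSpace E] {φ : ℝ → E → E}
    {c : E → EReal} (hφ : IsSDS φ c) {x : E} {s t u : ℝ} (hs : 0 ≤ s)
    (hst : ((s + t : ℝ) : EReal) < c x) (hu : u ∈ Set.Ioc 0 t) :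
    φ u (φ s x) = φ (s + u) x :=
  hφ.2.2.2.1 x s u hs hu.1.le <| lt_of_le_of_lt (by gcongr; exact hu.2) hst

theorem stmt_11_general {E : Type*} [MeasurableSpace E]
    (φ : ℝ → E → E) (c : E → EReal) (hSDS : IsSDS φ c)
    (g : E → ℝ)
    (hgsum : ∀ (x : E) (t : ℝ), 0 ≤ t → (t : EReal) < c x →
      Summable (fun s : Set.Ioc (0 : ℝ) t => g (φ s.1 x)))
    (a : E → ℝ → ℝ)
    (hadef : ∀ (x : E) (t : ℝ), a x t = ∑' s : Set.Ioc (0 : ℝ) t, g (φ s.1 x)) :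
    (∀ x, a x 0 = 0) ∧
    (∀ (x : E) (s t : ℝ), 0 ≤ s → 0 ≤ t → ((s + t : ℝ) : EReal) < c x →
      a x s + a (φ s x) t = a x (s + t)) := by
  refine ⟨fun x => by rw [hadef, Set.Ioc_self, tsum_empty], fun x s t hs ht hst => ?_⟩
  have shift : a (φ s x) t = ∑' v : Set.Ioc s (s + t), g (φ v x) := by
    rw [hadef, tsum_congr fun u => congrArg g (hSDS.map_map_of_mem_Ioc hs hst u.2),
      tsum_Ioc_comp_const_add (fun v => g (φ v x)), add_zero]
  rw [shift, hadef, hadef]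
  exact tsum_Ioc_add_tsum_Ioc (f := fun v => g (φ v x)) hs (le_add_of_nonneg_right ht)
    (hgsum x (s + t) (by linarith) hst)

theorem stmt_11 {E : Type*} [MeasurableSpace E]
    (φ : ℝ → E → E) (c : E → EReal) (hSDS : IsSDS φ c)
    (g : E → ℝ) (hgmeas : Measurable g)
    (hgsum : ∀ (x : E) (t : ℝ), 0 ≤ t → (t : EReal) < c x →
      Summable (fun s : Set.Ioc (0 : ℝ) t => g (φ s.1 x)))
    (a : E → ℝ → ℝ)
    (hadef : ∀ (x : E) (t : ℝ), a x t = ∑' s : Set.Ioc (0 : ℝ) t, g (φ s.1 x)) :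
    (∀ x, a x 0 = 0) ∧
    (∀ (x : E) (s t : ℝ), 0 ≤ s → 0 ≤ t → ((s + t : ℝ) : EReal) < c x →
      a x s + a (φ s x) t = a x (s + t)) :=
  stmt_11_general φ c hSDS g hgsum a hadef
end

section
/- Let φ be an SDS on E with killing time c, and let a : E × [0,∞) → ℝ be an additive functional of φ such that for every x ∈ E the function a(x,·) is nondecreasing and right-continuous on all of [0,∞); let μ_x denote the Lebesgue–Stieltjes measure of a(x,·), so μ_x((u, v]) = a(x, v) − a(x, u) for u ≤ v. Let g : E → ℝ be measurable such that for every x ∈ E and t < c(x), s ↦ g(φ(s, x)) is μ_x-integrable on (0, t]. Define a*(x, t) := ∫_{(0,t]} g(φ(s, x)) dμ_x(s). Then a*(x, 0) = 0 and a*(x, s) + a*(φ(s, x), t) = a*(x, s + t) whenever s + t < c(x). -/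
open MeasureTheory Filter Topology

/-! By additivity of `a`, the Lebesgue–Stieltjes measures of `a x` on `(s, s + t]` and of
`a (φ s x)` on `(0, t]` agree on intervals, so the first is the translate by `s` of the second.
Splitting `(0, s + t]` at `s` and changing variables then turns `a* (x, s + t)` into
`a* (x, s) + a* (φ s x, t)`, the flow property identifying `φ (s + r) x` with `φ r (φ s x)`. -/

open Set
open scoped ENNReal

namespace MeasureTheory.Measure

theorem restrict_Ioc_eq_of_measure_Ioc_eq {μ ν : Measure ℝ} {a b : ℝ}
    (hfin : μ (Ioc a b) ≠ ∞) (h : ∀ u v, a ≤ u → u ≤ v → v ≤ b → μ (Ioc u v) = ν (Ioc u v)) :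
    μ.restrict (Ioc a b) = ν.restrict (Ioc a b) := by
  have : IsFiniteMeasure (μ.restrict (Ioc a b)) := isFiniteMeasure_restrict.2 hfin
  refine ext_of_Ioc_finite _ _ ?_ fun u v _ => ?_
  · simp only [restrict_apply_univ]
    rcases le_total a b with hab | hab
    · exact h a b le_rfl hab le_rfl
    · simp [Ioc_eq_empty_of_le hab]
  · simp only [restrict_apply measurableSet_Ioc, Ioc_inter_Ioc]
    rcases le_total (max u a) (min v b) with huv | huv
    · exact h _ _ (le_max_right u a) huv (min_le_right v b)
    · simp [Ioc_eq_empty_of_le huv]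

theorem restrict_Ioc_add_eq_map {μ ν : Measure ℝ} {s t : ℝ} (hfin : μ (Ioc s (s + t)) ≠ ∞)
    (h : ∀ u v, 0 ≤ u → u ≤ v → v ≤ t → ν (Ioc u v) = μ (Ioc (s + u) (s + v))) :
    μ.restrict (Ioc s (s + t)) = map (s + ·) (ν.restrict (Ioc 0 t)) := by
  have hpre : (s + ·) ⁻¹' Ioc s (s + t) = Ioc 0 t := by simp [preimage_const_add_Ioc]
  rw [← hpre, ← (measurableEmbedding_addLeft s).restrict_map]
  refine restrict_Ioc_eq_of_measure_Ioc_eq hfin fun u v hu huv hv => ?_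
  rw [map_apply (measurable_const_add s) measurableSet_Ioc, preimage_const_add_Ioc,
    h _ _ (by linarith) (by linarith) (by linarith)]
  simp

end MeasureTheory.Measure

open MeasureTheory

theorem setIntegral_Ioc_add_eq {μ ν : Measure ℝ} {s t : ℝ} (hfin : μ (Ioc s (s + t)) ≠ ∞)
    (h : ∀ u v, 0 ≤ u → u ≤ v → v ≤ t → ν (Ioc u v) = μ (Ioc (s + u) (s + v)))
    (f : ℝ → ℝ) :
    ∫ r in Ioc s (s + t), f r ∂μ = ∫ r in Ioc 0 t, f (s + r) ∂ν := by
  rw [Measure.restrict_Ioc_add_eq_map hfin h, (measurableEmbedding_addLeft s).integral_map]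

theorem IsAdditiveFunctional.measure_Ioc_flow {E : Type*} [MeasurableSpace E]
    {φ : ℝ → E → E} {c : E → EReal} {a : E → ℝ → ℝ} (ha : IsAdditiveFunctional φ c a)
    {μ : E → Measure ℝ}
    (hμ : ∀ x u v, 0 ≤ u → u ≤ v → μ x (Ioc u v) = ENNReal.ofReal (a x v - a x u))
    {x : E} {s t : ℝ} (hs : 0 ≤ s) (hst : ((s + t : ℝ) : EReal) < c x)
    {u v : ℝ} (hu : 0 ≤ u) (huv : u ≤ v) (hvt : v ≤ t) :
    μ (φ s x) (Ioc u v) = μ x (Ioc (s + u) (s + v)) := by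
  have hlt : ∀ r ≤ t, ((s + r : ℝ) : EReal) < c x := fun r hr =>
    (EReal.coe_le_coe_iff.2 (by linarith)).trans_lt hst
  rw [hμ _ _ _ hu huv, hμ x _ _ (by linarith) (by linarith),
    ← ha.2.2.2 x s v hs (hu.trans huv) (hlt v hvt),
    ← ha.2.2.2 x s u hs hu (hlt u (huv.trans hvt))]
  ring_nf

theorem stmt_12_general {E : Type*} [MeasurableSpace E]
    (φ : ℝ → E → E) (c : E → EReal) (hSDS : IsSDS φ c)
    (a : E → ℝ → ℝ) (ha : IsAdditiveFunctional φ c a)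
    (μ : E → Measure ℝ)
    (hμ : ∀ (x : E) (u v : ℝ), 0 ≤ u → u ≤ v →
      μ x (Set.Ioc u v) = ENNReal.ofReal (a x v - a x u))
    (g : E → ℝ)
    (hgint : ∀ (x : E) (t : ℝ), 0 ≤ t → (t : EReal) < c x →
      IntegrableOn (fun s => g (φ s x)) (Set.Ioc 0 t) (μ x))
    (astar : E → ℝ → ℝ)
    (hastar : ∀ (x : E) (t : ℝ),
      astar x t = ∫ s in Set.Ioc (0 : ℝ) t, g (φ s x) ∂(μ x)) :
    (∀ x, astar x 0 = 0) ∧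
    (∀ (x : E) (s t : ℝ), 0 ≤ s → 0 ≤ t → ((s + t : ℝ) : EReal) < c x →
      astar x s + astar (φ s x) t = astar x (s + t)) := by
  refine ⟨fun x => by simp [hastar], fun x s t hs ht hst => ?_⟩
  have hflow : ∀ r ∈ Ioc 0 t, g (φ (s + r) x) = g (φ r (φ s x)) := fun r hr => by
    rw [hSDS.2.2.2.1 x s r hs hr.1.le
      ((EReal.coe_le_coe_iff.2 (by linarith [hr.2])).trans_lt hst)]
  have hint := hgint x (s + t) (by linarith) hst
  rw [hastar, hastar, hastar, ← setIntegral_congr_fun measurableSet_Ioc hflow,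
    ← setIntegral_Ioc_add_eq (by simp [hμ x s (s + t) hs (by linarith)])
      (fun u v hu huv hvt => ha.measure_Ioc_flow hμ hs hst hu huv hvt)
      (fun r => g (φ r x)),
    ← setIntegral_union (Ioc_disjoint_Ioc_of_le le_rfl) measurableSet_Ioc
      (hint.mono_set (Ioc_subset_Ioc le_rfl (by linarith)))
      (hint.mono_set (Ioc_subset_Ioc hs le_rfl)),
    Ioc_union_Ioc_eq_Ioc hs (by linarith)]

theorem stmt_12 {E : Type*} [MeasurableSpace E]
    (φ : ℝ → E → E) (c : E → EReal) (hSDS : IsSDS φ c)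
    (a : E → ℝ → ℝ) (ha : IsAdditiveFunctional φ c a)
    (hmono : ∀ x : E, MonotoneOn (a x) (Set.Ici 0))
    (hrc : ∀ (x : E) (t : ℝ), 0 ≤ t → ContinuousWithinAt (a x) (Set.Ici t) t)
    (μ : E → Measure ℝ)
    (hμ : ∀ (x : E) (u v : ℝ), 0 ≤ u → u ≤ v →
      μ x (Set.Ioc u v) = ENNReal.ofReal (a x v - a x u))
    (g : E → ℝ) (hgmeas : Measurable g)
    (hgint : ∀ (x : E) (t : ℝ), 0 ≤ t → (t : EReal) < c x →
      IntegrableOn (fun s => g (φ s x)) (Set.Ioc 0 t) (μ x))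
    (astar : E → ℝ → ℝ)
    (hastar : ∀ (x : E) (t : ℝ),
      astar x t = ∫ s in Set.Ioc (0 : ℝ) t, g (φ s x) ∂(μ x)) :
    (∀ x, astar x 0 = 0) ∧
    (∀ (x : E) (s t : ℝ), 0 ≤ s → 0 ≤ t → ((s + t : ℝ) : EReal) < c x →
      astar x s + astar (φ s x) t = astar x (s + t)) :=
  stmt_12_general φ c hSDS a ha μ hμ g hgint astar hastar
end

section
/- Let E be a measurable space, φ : [0,∞) × E → E measurable with φ(0,x) = x, and let F : E × [0,∞) → [0,1] be measurable with, for each x ∈ E: F(x, 0) = 1 and F(x,·) nonincreasing and right-continuous. Set c(x) := inf{t ≥ 0 : F(x,t) = 0} (with c(x) = ∞ if F(x,·) never vanishes), and assume φ(t, φ(s,x)) = φ(s+t, x) for s + t < c(x) and the multiplicative cocycle F(x, s + t) = F(x, s) · F(φ(s, x), t) for all x ∈ E, 0 ≤ s < c(x) and t ≥ 0. For each x let ν_x be the Lebesgue–Stieltjes measure of the nondecreasing right-continuous function t ↦ 1 − F(x, t), and define the conditional hazard function Λ(x, t) := ∫_{(0,t]} F(x, s−)⁻¹ dν_x(s), where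 F(x, s−) denotes the left limit of F(x,·) at s. Then Λ(x, 0) = 0 and Λ(x, s + t) = Λ(x, s) + Λ(φ(s, x), t) whenever s + t < c(x). -/
/-!
For `u ≥ 0` the cocycle identity reads `F x (s + u) = F x s * F y u` with `y = φ s x`. Hence on
`(s, ∞)` the measure `ν x` is `F x s` times the translate by `s` of `ν y`, and the left limits of
`F x` are `F x s` times the translated left limits of `F y`. In `∫_(s, s+t] (F x ·⁻)⁻¹ dν x` the
factor `F x s > 0` cancels, leaving `Λ y t`; splitting `(0, s+t]` at `s` gives additivity. Below
`c x` the integrand is bounded by `(F x (s+t))⁻¹`, so both pieces are integrable.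
-/

open MeasureTheory Filter Topology Set Function

theorem comp_max_eventuallyEq_nhdsLT {f : ℝ → ℝ} {a u : ℝ} (hu : a < u) :
    (fun v => f (max v a)) =ᶠ[𝓝[<] u] f :=
  eventually_of_mem (Ioo_mem_nhdsLT hu) fun _ hv => congrArg f (max_eq_left hv.1.le)

/- `fun v => f (max v a)` is an antitone extension of `f` to all of `ℝ` that agrees with `f` near
every `u > a`, so Mathlib's left-limit API for antitone functions applies to it. -/
namespace AntitoneOn

variable {f : ℝ → ℝ} {a u : ℝ}

theorem antitone_comp_max (hf : AntitoneOn f (Ici a)) : Antitone fun v => f (max v a) :=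
  fun _ _ hvw => hf (mem_Ici.2 (le_max_right _ _)) (mem_Ici.2 (le_max_right _ _))
    (max_le_max_right a hvw)

theorem leftLim_comp_max (hf : AntitoneOn f (Ici a)) (hu : a < u) :
    leftLim (fun v => f (max v a)) u = leftLim f u :=
  (leftLim_eq_of_tendsto
    ((hf.antitone_comp_max.tendsto_leftLim u).congr' (comp_max_eventuallyEq_nhdsLT hu))).symm

theorem tendsto_leftLim (hf : AntitoneOn f (Ici a)) (hu : a < u) :
    Tendsto f (𝓝[<] u) (𝓝 (leftLim f u)) := by
  rw [← hf.leftLim_comp_max hu]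
  exact (hf.antitone_comp_max.tendsto_leftLim u).congr' (comp_max_eventuallyEq_nhdsLT hu)

theorem le_leftLim (hf : AntitoneOn f (Ici a)) (hu : a < u) {T : ℝ} (huT : u ≤ T) :
    f T ≤ leftLim f u := by
  rw [← hf.leftLim_comp_max hu, ← max_eq_left (hu.le.trans huT)]
  exact hf.antitone_comp_max.le_leftLim huT

theorem leftLim (hf : AntitoneOn f (Ici a)) : AntitoneOn (leftLim f) (Ioi a) := by
  intro u hu v hv huv
  rw [← hf.leftLim_comp_max hu, ← hf.leftLim_comp_max hv]
  exact hf.antitone_comp_max.leftLim huv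

end AntitoneOn

theorem leftLim_add_eq_mul {G H : ℝ → ℝ} {s u : ℝ} (hH : AntitoneOn H (Ici 0)) (hu : 0 < u)
    (hGH : ∀ v, 0 ≤ v → G (s + v) = G s * H v) :
    leftLim G (s + u) = G s * leftLim H u := by
  have hshift : Tendsto (fun v => v - s) (𝓝[<] (s + u)) (𝓝[<] u) := by
    refine tendsto_nhdsWithin_of_tendsto_nhds_of_eventually_within _ ?_ ?_
    · simpa using ((continuous_sub_right s).tendsto (s + u)).mono_left nhdsWithin_le_nhds
    · filter_upwards [self_mem_nhdsWithin] with v hv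
      simpa [mem_Iio, sub_lt_iff_lt_add'] using hv
  have hGeq : (fun v => G s * H (v - s)) =ᶠ[𝓝[<] (s + u)] G :=
    eventually_of_mem (Ioo_mem_nhdsLT (by linarith : s < s + u)) fun v hv => by
      simp only [← hGH _ (sub_nonneg.2 hv.1.le), add_sub_cancel]
  exact leftLim_eq_of_tendsto
    ((((hH.tendsto_leftLim hu).comp hshift).const_mul (G s)).congr' hGeq)

theorem restrict_Ioi_eq_smul_map_add {G H : ℝ → ℝ} {ν μ : Measure ℝ} {s : ℝ} (hs : 0 ≤ s)
    (hGs : 0 ≤ G s)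
    (hν : ∀ u v, 0 ≤ u → u ≤ v → ν (Ioc u v) = ENNReal.ofReal (G u - G v))
    (hμ : ∀ u v, 0 ≤ u → u ≤ v → μ (Ioc u v) = ENNReal.ofReal (H u - H v))
    (hGH : ∀ u, 0 ≤ u → G (s + u) = G s * H u) :
    ν.restrict (Ioi s) = ENNReal.ofReal (G s) • (μ.restrict (Ioi 0)).map (· + s) := by
  refine Measure.ext_of_Ioc' _ _ (fun a b _ => ?_) fun a b _ => ?_
  · rw [Measure.restrict_apply measurableSet_Ioc, Ioc_inter_Ioi]
    rcases le_total b (max a s) with hba | hab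
    · simp [Ioc_eq_empty_of_le hba]
    · exact (hν _ _ (hs.trans (le_max_right a s)) hab).trans_lt ENNReal.ofReal_lt_top |>.ne
  · rw [Measure.restrict_apply measurableSet_Ioc, Ioc_inter_Ioi, Measure.smul_apply,
      Measure.map_apply (measurable_add_const s) measurableSet_Ioc, preimage_add_const_Ioc,
      Measure.restrict_apply measurableSet_Ioc, Ioc_inter_Ioi,
      show max (a - s) 0 = max a s - s by rw [← max_sub_sub_right, sub_self]]
    set p := max a s
    have hsp : s ≤ p := le_max_right a s
    rcases le_total b p with hbp | hpb
    · simp [Ioc_eq_empty_of_le hbp, Ioc_eq_empty_of_le (sub_le_sub_right hbp s)]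
    · have hG : ∀ q, s ≤ q → G q = G s * H (q - s) := fun q hq => by
        rw [← hGH _ (sub_nonneg.2 hq), add_sub_cancel]
      rw [hν _ _ (hs.trans hsp) hpb, hμ _ _ (sub_nonneg.2 hsp) (sub_le_sub_right hpb s),
        smul_eq_mul, ← ENNReal.ofReal_mul hGs, mul_sub, ← hG p hsp, ← hG b (hsp.trans hpb)]

theorem setIntegral_Ioc_add_eq_mul {G H : ℝ → ℝ} {ν μ : Measure ℝ} {s : ℝ} (t : ℝ) (hs : 0 ≤ s)
    (hGs : 0 ≤ G s)
    (hν : ∀ u v, 0 ≤ u → u ≤ v → ν (Ioc u v) = ENNReal.ofReal (G u - G v))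
    (hμ : ∀ u v, 0 ≤ u → u ≤ v → μ (Ioc u v) = ENNReal.ofReal (H u - H v))
    (hGH : ∀ u, 0 ≤ u → G (s + u) = G s * H u) (f : ℝ → ℝ) :
    ∫ u in Ioc s (s + t), f u ∂ν = G s * ∫ u in Ioc 0 t, f (u + s) ∂μ := by
  rw [← Measure.restrict_restrict_of_subset Ioc_subset_Ioi_self,
    restrict_Ioi_eq_smul_map_add hs hGs hν hμ hGH, Measure.restrict_smul, integral_smul_measure,
    ENNReal.toReal_ofReal hGs, smul_eq_mul]
  congr 1
  rw [← MeasurableEquiv.coe_addRight, setIntegral_map_equiv, MeasurableEquiv.coe_addRight,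
    preimage_add_const_Ioc, sub_self, add_sub_cancel_left,
    Measure.restrict_restrict_of_subset Ioc_subset_Ioi_self]

theorem integrableOn_inv_leftLim {G : ℝ → ℝ} {ν : Measure ℝ} {T : ℝ} (hG : AntitoneOn G (Ici 0))
    (hGT : 0 < G T) (hν : ν (Ioc 0 T) ≠ ⊤) :
    IntegrableOn (fun u => (leftLim G u)⁻¹) (Ioc 0 T) ν := by
  refine IntegrableOn.of_bound hν.lt_top ?_ (G T)⁻¹ ?_
  · exact (aemeasurable_restrict_of_antitoneOn measurableSet_Ioc
      (hG.leftLim.mono Ioc_subset_Ioi_self)).inv.aestronglyMeasurable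
  · refine (ae_restrict_iff' measurableSet_Ioc).2 (Eventually.of_forall fun u hu => ?_)
    have hle : G T ≤ leftLim G u := hG.le_leftLim hu.1 hu.2
    rw [Real.norm_eq_abs, abs_inv, abs_of_pos (hGT.trans_le hle)]
    exact inv_anti₀ hGT hle

theorem setIntegral_Ioc_add_inv_leftLim_eq {G H : ℝ → ℝ} {ν μ : Measure ℝ} {s : ℝ} (t : ℝ)
    (hs : 0 ≤ s) (hGs : 0 < G s) (hH : AntitoneOn H (Ici 0))
    (hν : ∀ u v, 0 ≤ u → u ≤ v → ν (Ioc u v) = ENNReal.ofReal (G u - G v))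
    (hμ : ∀ u v, 0 ≤ u → u ≤ v → μ (Ioc u v) = ENNReal.ofReal (H u - H v))
    (hGH : ∀ u, 0 ≤ u → G (s + u) = G s * H u) :
    ∫ u in Ioc s (s + t), (leftLim G u)⁻¹ ∂ν = ∫ u in Ioc 0 t, (leftLim H u)⁻¹ ∂μ := by
  rw [setIntegral_Ioc_add_eq_mul t hs hGs.le hν hμ hGH,
    setIntegral_congr_fun measurableSet_Ioc fun u hu => by
      rw [add_comm, leftLim_add_eq_mul hH hu.1 hGH, mul_inv],
    integral_const_mul, mul_inv_cancel_left₀ hGs.ne']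

theorem pos_of_lt_sInf_zeros {G : ℝ → ℝ} (hG : ∀ u, 0 ≤ G u) {u : ℝ} (hu : 0 ≤ u)
    (h : (u : EReal) < sInf {v : EReal | ∃ w : ℝ, 0 ≤ w ∧ v = w ∧ G w = 0}) : 0 < G u :=
  (hG u).lt_of_ne' fun h0 => h.not_ge (sInf_le ⟨u, hu, rfl, h0⟩)

theorem stmt_13_general {E : Type*}
    (φ : ℝ → E → E)
    (F : E → ℝ → ℝ)
    (hF01 : ∀ (x : E) (t : ℝ), 0 ≤ F x t ∧ F x t ≤ 1)
    (hFanti : ∀ x : E, AntitoneOn (F x) (Set.Ici 0))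
    (c : E → EReal)
    (hc : ∀ x : E, c x = sInf {v : EReal | ∃ u : ℝ, 0 ≤ u ∧ v = (u : EReal) ∧ F x u = 0})
    (hFmul : ∀ (x : E) (s t : ℝ), 0 ≤ s → (s : EReal) < c x → 0 ≤ t →
      F x (s + t) = F x s * F (φ s x) t)
    (ν : E → Measure ℝ)
    (hν : ∀ (x : E) (u v : ℝ), 0 ≤ u → u ≤ v →
      ν x (Set.Ioc u v) = ENNReal.ofReal ((1 - F x v) - (1 - F x u)))
    (Λ : E → ℝ → ℝ)
    (hΛ : ∀ (x : E) (t : ℝ),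
      Λ x t = ∫ s in Set.Ioc (0 : ℝ) t, (Function.leftLim (F x) s)⁻¹ ∂(ν x)) :
    (∀ x, Λ x 0 = 0) ∧
    (∀ (x : E) (s t : ℝ), 0 ≤ s → 0 ≤ t → ((s + t : ℝ) : EReal) < c x →
      Λ x (s + t) = Λ x s + Λ (φ s x) t) := by
  have hνIoc (x : E) (u v : ℝ) (hu : 0 ≤ u) (huv : u ≤ v) :
      ν x (Ioc u v) = ENNReal.ofReal (F x u - F x v) := by
    rw [hν x u v hu huv, sub_sub_sub_cancel_left]
  have hpos (x : E) (u : ℝ) (hu : 0 ≤ u) (huc : (u : EReal) < c x) : 0 < F x u :=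
    pos_of_lt_sInf_zeros (fun v => (hF01 x v).1) hu (hc x ▸ huc)
  refine ⟨fun x => by rw [hΛ, Ioc_self, Measure.restrict_empty, integral_zero_measure], ?_⟩
  intro x s t hs ht hstc
  have hst : s ≤ s + t := le_add_of_nonneg_right ht
  have hsc : (s : EReal) < c x := (EReal.coe_le_coe_iff.2 hst).trans_lt hstc
  have hint : IntegrableOn (fun u => (leftLim (F x) u)⁻¹) (Ioc 0 (s + t)) (ν x) :=
    integrableOn_inv_leftLim (hFanti x) (hpos x _ (hs.trans hst) hstc)
      ((hνIoc x 0 _ le_rfl (hs.trans hst)).trans_ne ENNReal.ofReal_ne_top)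
  rw [hΛ, hΛ, hΛ, ← Ioc_union_Ioc_eq_Ioc hs hst,
    setIntegral_union (Ioc_disjoint_Ioc_of_le le_rfl) measurableSet_Ioc
      (hint.mono_set (Ioc_subset_Ioc_right hst)) (hint.mono_set (Ioc_subset_Ioc_left hs)),
    setIntegral_Ioc_add_inv_leftLim_eq t hs (hpos x s hs hsc) (hFanti _) (hνIoc x) (hνIoc _)
      fun u hu => hFmul x s u hs hsc hu]

theorem stmt_13 {E : Type*} [MeasurableSpace E]
    (φ : ℝ → E → E) (hφmeas : Measurable (fun p : ℝ × E => φ p.1 p.2))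
    (hφ0 : ∀ x, φ 0 x = x)
    (F : E → ℝ → ℝ) (hFmeas : Measurable (fun p : E × ℝ => F p.1 p.2))
    (hF01 : ∀ (x : E) (t : ℝ), 0 ≤ F x t ∧ F x t ≤ 1)
    (hF0 : ∀ x, F x 0 = 1)
    (hFanti : ∀ x : E, AntitoneOn (F x) (Set.Ici 0))
    (hFrc : ∀ (x : E) (t : ℝ), 0 ≤ t → ContinuousWithinAt (F x) (Set.Ici t) t)
    (c : E → EReal)
    (hc : ∀ x : E, c x = sInf {v : EReal | ∃ u : ℝ, 0 ≤ u ∧ v = (u : EReal) ∧ F x u = 0})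
    (hφadd : ∀ (x : E) (s t : ℝ), 0 ≤ s → 0 ≤ t → ((s + t : ℝ) : EReal) < c x →
      φ t (φ s x) = φ (s + t) x)
    (hFmul : ∀ (x : E) (s t : ℝ), 0 ≤ s → (s : EReal) < c x → 0 ≤ t →
      F x (s + t) = F x s * F (φ s x) t)
    (ν : E → Measure ℝ)
    (hν : ∀ (x : E) (u v : ℝ), 0 ≤ u → u ≤ v →
      ν x (Set.Ioc u v) = ENNReal.ofReal ((1 - F x v) - (1 - F x u)))
    (Λ : E → ℝ → ℝ)
    (hΛ : ∀ (x : E) (t : ℝ),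
      Λ x t = ∫ s in Set.Ioc (0 : ℝ) t, (Function.leftLim (F x) s)⁻¹ ∂(ν x)) :
    (∀ x, Λ x 0 = 0) ∧
    (∀ (x : E) (s t : ℝ), 0 ≤ s → 0 ≤ t → ((s + t : ℝ) : EReal) < c x →
      Λ x (s + t) = Λ x s + Λ (φ s x) t) :=
  stmt_13_general φ F hF01 hFanti c hc hFmul ν hν Λ hΛ
end

section
/- Let φ be an SDS on E with killing time c, and let Λ : E × [0,∞) → ℝ be an additive functional of φ such that for each x ∈ E the function Λ(x,·) is nondecreasing. For 0 < s < c(x), write ΔΛ(x, s) := Λ(x, s) − Λ(x, s−), where Λ(x, s−) is the left limit. Assume that for each x ∈ E and t < c(x) the family (ΔΛ(x, s))_{s ∈ (0,t]} is summable and the family (1 − ΔΛ(x, s))_{s ∈ (0,t]} is multipliable. Define the Stieltjes exponential F(x, t) := exp(−(Λ(x, t) − ∑'_{s ∈ (0,t]} ΔΛ(x, s))) · ∏'_{s ∈ (0,t]} (1 − ΔΛ(x, s)) for t < c(x). Then F(x, 0) = 1 and F(x, s + t) = F(x, s) · F(φ(s, x), t) whenever s + t < c(x). -/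
open MeasureTheory Filter Topology

/-!
By additivity, `Λ (φ s x) u = Λ x (s + u) - Λ x s` for `u ≤ t`, so the jumps of `Λ (φ s x)` on
`(0, t]` are the jumps of `Λ x` on `(s, s + t]`. Splitting `(0, s + t] = (0, s] ∪ (s, s + t]`
therefore splits the sum and the product of the jumps of `Λ x`, and together with
`Λ x (s + t) = Λ x s + Λ (φ s x) t` this splits the exponential factor as well.
-/

open Function Set

section LeftLim

variable {α α' β γ : Type*} [LinearOrder α] [TopologicalSpace α] [OrderTopology α]
  [TopologicalSpace β] [T2Space β]

theorem leftLim_congr_of_eventuallyEq {f g : α → β} {a : α} (h : f =ᶠ[𝓝[<] a] g)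
    (ha : f a = g a) : leftLim f a = leftLim g a := by
  by_cases hbot : 𝓝[<] a = ⊥
  · rw [leftLim_eq_of_eq_bot f hbot, leftLim_eq_of_eq_bot g hbot, ha]
  have : (𝓝[<] a).NeBot := ⟨hbot⟩
  by_cases hf : ∃ y, Tendsto f (𝓝[<] a) (𝓝 y)
  · obtain ⟨y, hy⟩ := hf
    rw [leftLim_eq_of_tendsto hy, leftLim_eq_of_tendsto (hy.congr' h)]
  · have hg : ¬∃ y, Tendsto g (𝓝[<] a) (𝓝 y) := fun ⟨y, hy⟩ ↦ hf ⟨y, hy.congr' h.symm⟩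
    rw [leftLim_eq_of_not_tendsto f hf, leftLim_eq_of_not_tendsto g hg, ha]

theorem leftLim_comp_of_map_nhdsLT_eq [LinearOrder α'] [TopologicalSpace α'] [OrderTopology α']
    (f : α' → β) {e : α → α'} {a : α} (he : map e (𝓝[<] a) = 𝓝[<] (e a)) :
    leftLim (f ∘ e) a = leftLim f (e a) := by
  have htendsto : ∀ y, Tendsto (f ∘ e) (𝓝[<] a) (𝓝 y) ↔ Tendsto f (𝓝[<] (e a)) (𝓝 y) := by
    intro y
    rw [← he, tendsto_map'_iff]
  by_cases hbot : 𝓝[<] a = ⊥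
  · have hbot' : 𝓝[<] (e a) = ⊥ := by rw [← he, hbot, map_bot]
    rw [leftLim_eq_of_eq_bot _ hbot, leftLim_eq_of_eq_bot _ hbot', comp_apply]
  have : (𝓝[<] a).NeBot := ⟨hbot⟩
  have : (𝓝[<] (e a)).NeBot := by rw [← he]; infer_instance
  by_cases hf : ∃ y, Tendsto f (𝓝[<] (e a)) (𝓝 y)
  · obtain ⟨y, hy⟩ := hf
    rw [leftLim_eq_of_tendsto hy, leftLim_eq_of_tendsto ((htendsto y).2 hy)]
  · rw [leftLim_eq_of_not_tendsto f hf,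
      leftLim_eq_of_not_tendsto _ (by simpa only [htendsto] using hf), comp_apply]

theorem Homeomorph.leftLim_comp [TopologicalSpace γ] [T2Space γ] (h : β ≃ₜ γ) (f : α → β)
    (a : α) : leftLim (h ∘ f) a = h (leftLim f a) := by
  have htendsto : ∀ z, Tendsto (h ∘ f) (𝓝[<] a) (𝓝 z) ↔ Tendsto f (𝓝[<] a) (𝓝 (h.symm z)) := by
    intro z
    rw [h.isInducing.tendsto_nhds_iff, h.apply_symm_apply]
  by_cases hbot : 𝓝[<] a = ⊥
  · rw [leftLim_eq_of_eq_bot _ hbot, leftLim_eq_of_eq_bot _ hbot, comp_apply]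
  have : (𝓝[<] a).NeBot := ⟨hbot⟩
  by_cases hf : ∃ y, Tendsto f (𝓝[<] a) (𝓝 y)
  · obtain ⟨y, hy⟩ := hf
    rw [leftLim_eq_of_tendsto hy, leftLim_eq_of_tendsto ((htendsto (h y)).2 (by simpa using hy))]
  · have hhf : ¬∃ z, Tendsto (h ∘ f) (𝓝[<] a) (𝓝 z) := fun ⟨z, hz⟩ ↦ hf ⟨_, (htendsto z).1 hz⟩
    rw [leftLim_eq_of_not_tendsto f hf, leftLim_eq_of_not_tendsto _ hhf, comp_apply]

end LeftLim

section SplitIoc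

variable {α M : Type*} [AddCommGroup α] [LinearOrder α] [IsOrderedAddMonoid α]
  [CommMonoid M] [TopologicalSpace M] [ContinuousMul M] [T2Space M]

@[to_additive]
theorem tprod_Ioc_add {f : α → M} {s t : α} (hs : 0 ≤ s) (ht : 0 ≤ t)
    (h₁ : Multipliable fun v : Ioc 0 s ↦ f v) (h₂ : Multipliable fun u : Ioc 0 t ↦ f (s + u)) :
    ∏' v : Ioc 0 (s + t), f v = (∏' v : Ioc 0 s, f v) * ∏' u : Ioc 0 t, f (s + u) := by
  have hinj : InjOn (s + ·) (Ioc 0 t) := (add_right_injective s).injOn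
  have himage : (s + ·) '' Ioc 0 t = Ioc s (s + t) := by
    rw [image_const_add_Ioc, add_zero]
  have h₂' : Multipliable fun v : Ioc s (s + t) ↦ f v := by
    rw [← himage]
    exact (Equiv.Set.imageOfInjOn _ _ hinj).multipliable_iff.mp h₂
  rw [← Ioc_union_Ioc_eq_Ioc hs (le_add_of_nonneg_right ht),
    Multipliable.tprod_union_disjoint (Ioc_disjoint_Ioc_of_le le_rfl) h₁ h₂', ← himage,
    tprod_image _ hinj]

end SplitIoc

section Flow

variable {E : Type*} [MeasurableSpace E] {φ : ℝ → E → E} {c : E → EReal}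

theorem IsSDS.lt_c_flow (hφ : IsSDS φ c) {x : E} {s t : ℝ} (hs : 0 ≤ s) (ht : 0 ≤ t)
    (hst : ((s + t : ℝ) : EReal) < c x) : (t : EReal) < c (φ s x) := by
  have hsc : (s : EReal) < c x := (EReal.coe_le_coe_iff.2 (by linarith)).trans_lt hst
  rw [hφ.2.2.2.2 x s hs hsc, EReal.lt_sub_iff_add_lt (.inl (EReal.coe_ne_bot s))
    (.inl (EReal.coe_ne_top s)), ← EReal.coe_add, add_comm]
  exact hst

/-- This also holds where `Λ x` has no left limit at `s + u`: `leftLim` then falls back to the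
value of the function, consistently on both sides. -/
theorem IsAdditiveFunctional.jump_flow_eq {Λ : E → ℝ → ℝ} (hΛ : IsAdditiveFunctional φ c Λ)
    {x : E} {s u : ℝ} (hs : 0 ≤ s) (hu : 0 < u) (hsu : ((s + u : ℝ) : EReal) < c x) :
    Λ (φ s x) u - leftLim (Λ (φ s x)) u = Λ x (s + u) - leftLim (Λ x) (s + u) := by
  have hshift : ∀ v ∈ Icc 0 u, Λ (φ s x) v = Λ x (s + v) - Λ x s := fun v hv ↦
    eq_sub_of_add_eq' <| hΛ.2.2.2 x s v hs hv.1 <|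
      (EReal.coe_le_coe_iff.2 (by linarith [hv.2])).trans_lt hsu
  have hu' : u ∈ Icc 0 u := ⟨hu.le, le_rfl⟩
  have hleft : Λ (φ s x) =ᶠ[𝓝[<] u] Homeomorph.subRight (Λ x s) ∘ Λ x ∘ (s + ·) := by
    filter_upwards [Ioo_mem_nhdsLT hu] with v hv using hshift v ⟨hv.1.le, hv.2.le⟩
  rw [leftLim_congr_of_eventuallyEq hleft (hshift u hu'), Homeomorph.leftLim_comp,
    leftLim_comp_of_map_nhdsLT_eq _ map_add_left_nhdsLT, hshift u hu']
  simp only [Homeomorph.subRight_apply]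
  ring

end Flow

theorem stmt_14_general {E : Type*} [MeasurableSpace E]
    (φ : ℝ → E → E) (c : E → EReal) (hSDS : IsSDS φ c)
    (Λ : E → ℝ → ℝ) (hΛ : IsAdditiveFunctional φ c Λ)
    (hsum : ∀ (x : E) (t : ℝ), 0 ≤ t → (t : EReal) < c x →
      Summable (fun s : Set.Ioc (0 : ℝ) t => Λ x s.1 - Function.leftLim (Λ x) s.1))
    (hprod : ∀ (x : E) (t : ℝ), 0 ≤ t → (t : EReal) < c x →
      Multipliable (fun s : Set.Ioc (0 : ℝ) t => 1 - (Λ x s.1 - Function.leftLim (Λ x) s.1)))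
    (F : E → ℝ → ℝ)
    (hF : ∀ (x : E) (t : ℝ),
      F x t = Real.exp (-(Λ x t - ∑' s : Set.Ioc (0 : ℝ) t, (Λ x s.1 - Function.leftLim (Λ x) s.1)))
        * ∏' s : Set.Ioc (0 : ℝ) t, (1 - (Λ x s.1 - Function.leftLim (Λ x) s.1))) :
    (∀ x, F x 0 = 1) ∧
    (∀ (x : E) (s t : ℝ), 0 ≤ s → 0 ≤ t → ((s + t : ℝ) : EReal) < c x →
      F x (s + t) = F x s * F (φ s x) t) := by
  refine ⟨fun x ↦ by simp [hF, hΛ.2.2.1 x], fun x s t hs ht hst ↦ ?_⟩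
  have hsc : (s : EReal) < c x := (EReal.coe_le_coe_iff.2 (by linarith)).trans_lt hst
  have htc : (t : EReal) < c (φ s x) := hSDS.lt_c_flow hs ht hst
  have hjump : ∀ u : Ioc (0 : ℝ) t, Λ (φ s x) u - leftLim (Λ (φ s x)) u
      = Λ x (s + u) - leftLim (Λ x) (s + u) := fun u ↦
    hΛ.jump_flow_eq hs u.2.1 <| (EReal.coe_le_coe_iff.2 (by linarith [u.2.2])).trans_lt hst
  have hsum' := hsum (φ s x) t ht htc
  have hprod' := hprod (φ s x) t ht htc
  simp only [hjump] at hsum' hprod'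
  rw [hF x (s + t), hF x s, hF (φ s x) t]
  simp only [hjump]
  rw [tsum_Ioc_add (f := fun v ↦ Λ x v - leftLim (Λ x) v) hs ht (hsum x s hs hsc) hsum',
    tprod_Ioc_add (f := fun v ↦ 1 - (Λ x v - leftLim (Λ x) v)) hs ht (hprod x s hs hsc) hprod',
    ← hΛ.2.2.2 x s t hs ht hst]
  simp only [neg_sub, Real.exp_sub, Real.exp_add]
  ring

theorem stmt_14 {E : Type*} [MeasurableSpace E]
    (φ : ℝ → E → E) (c : E → EReal) (hSDS : IsSDS φ c)
    (Λ : E → ℝ → ℝ) (hΛ : IsAdditiveFunctional φ c Λ)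
    (hmono : ∀ x : E, MonotoneOn (Λ x) (Set.Ici 0))
    (hsum : ∀ (x : E) (t : ℝ), 0 ≤ t → (t : EReal) < c x →
      Summable (fun s : Set.Ioc (0 : ℝ) t => Λ x s.1 - Function.leftLim (Λ x) s.1))
    (hprod : ∀ (x : E) (t : ℝ), 0 ≤ t → (t : EReal) < c x →
      Multipliable (fun s : Set.Ioc (0 : ℝ) t => 1 - (Λ x s.1 - Function.leftLim (Λ x) s.1)))
    (F : E → ℝ → ℝ)
    (hF : ∀ (x : E) (t : ℝ),
      F x t = Real.exp (-(Λ x t - ∑' s : Set.Ioc (0 : ℝ) t, (Λ x s.1 - Function.leftLim (Λ x) s.1)))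
        * ∏' s : Set.Ioc (0 : ℝ) t, (1 - (Λ x s.1 - Function.leftLim (Λ x) s.1))) :
    (∀ x, F x 0 = 1) ∧
    (∀ (x : E) (s t : ℝ), 0 ≤ s → 0 ≤ t → ((s + t : ℝ) : EReal) < c x →
      F x (s + t) = F x s * F (φ s x) t) :=
  stmt_14_general φ c hSDS Λ hΛ hsum hprod F hF
end

section
/- Let φ be an SDS on E with killing time c. Let Λ : E × [0,∞) → ℝ be an additive functional of φ such that for each x ∈ E the function Λ(x,·) is nondecreasing and right-continuous on all of [0,∞), and let μ_x denote its Lebesgue–Stieltjes measure, μ_x((u,v]) = Λ(x,v) − Λ(x,u). Let Q : E → Measure(E) be a measurable family of probability measures and let f : E → ℝ be measurable such that for every x ∈ E and t < c(x), ∫_{(0,t]} ∫_E |f(y) − f(φ(s, x))| dQ(φ(s,x))(y) dμ_x(s) < ∞. Define 𝒜f(x, t) := f(φ(t, x)) − f(x) + ∫_{(0,t]} (∫_E (f(y) − f(φ(s, x))) dQ(φ(s,x))(y)) dμ_x(s). Then 𝒜f(x, 0) = 0 and 𝒜f(x, s) + 𝒜f(φ(s, x), t) = 𝒜f(x, s +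 t) whenever s + t < c(x), i.e. the measure-valued generator applied to f is an additive functional of the SDS φ. -/
open MeasureTheory Filter Topology

/-!
Splitting `(0, s + t]` at `s`, the first part of the integral is the one in `𝒜f(x, s)`. On the
second part, the additivity of `Λ` says that `μ_{φ(s,x)}` on `(0, t]` is `μ_x` on `(s, s + t]`
shifted back by `s`, while the flow property turns `φ(u, φ(s,x))` into `φ(s + u, x)`; so it is
the integral in `𝒜f(φ(s,x), t)`. The boundary terms `f(φ(·, x)) - f(x)` telescope.
-/

open Set

namespace MeasureTheory.Measure

theorem restrict_Ioc_eq_map_sub {μ ν : Measure ℝ} {s t : ℝ}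
    (h : ∀ u v, 0 ≤ u → u ≤ v → v ≤ t → ν (Ioc u v) = μ (Ioc (u + s) (v + s)))
    (hfin : ∀ u v, 0 ≤ u → u ≤ v → v ≤ t → ν (Ioc u v) ≠ ⊤) :
    ν.restrict (Ioc 0 t) = (μ.restrict (Ioc s (s + t))).map (· - s) := by
  have hrestrict : ∀ a b : ℝ,
      ν.restrict (Ioc 0 t) (Ioc a b) = ν (Ioc (max a 0) (min b t)) := fun a b => by
    rw [restrict_apply measurableSet_Ioc, Ioc_inter_Ioc]
  have hshift : ∀ a b : ℝ, ν (Ioc (max a 0) (min b t)) =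
      μ (Ioc (max a 0 + s) (min b t + s)) ∧ ν (Ioc (max a 0) (min b t)) ≠ ⊤ := fun a b => by
    rcases le_or_gt (max a 0) (min b t) with hab | hab
    · exact ⟨h _ _ (le_max_right a 0) hab (min_le_right b t),
        hfin _ _ (le_max_right a 0) hab (min_le_right b t)⟩
    · simp [Ioc_eq_empty_of_le hab.le, Ioc_eq_empty_of_le (add_le_add_left hab.le s)]
  refine ext_of_Ioc' _ _ (fun a b _ => hrestrict a b ▸ (hshift a b).2) (fun a b _ => ?_)
  have hsupp : Ioc s (s + t) = (· - s) ⁻¹' Ioc 0 t := by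
    rw [preimage_sub_const_Ioc, zero_add, add_comm]
  rw [hrestrict, map_apply (measurable_sub_const s) measurableSet_Ioc,
    restrict_apply (measurable_sub_const s measurableSet_Ioc), hsupp, ← preimage_inter,
    Ioc_inter_Ioc, preimage_sub_const_Ioc, (hshift a b).1]

end MeasureTheory.Measure

section Generator

variable {E : Type*} [MeasurableSpace E]

noncomputable def jumpOperator (Q : E → Measure E) (f : E → ℝ) (y : E) : ℝ :=
  ∫ z, (f z - f y) ∂Q y

theorem measurable_jumpOperator {Q : E → Measure E} (hQ : Measurable Q)
    [∀ y, IsProbabilityMeasure (Q y)] {f : E → ℝ} (hf : Measurable f) :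
    Measurable (jumpOperator Q f) := by
  let κ : ProbabilityTheory.Kernel E E := ⟨Q, hQ⟩
  have : ProbabilityTheory.IsMarkovKernel κ := ⟨inferInstance⟩
  have hF : StronglyMeasurable (fun p : E × E => f p.2 - f p.1) :=
    ((hf.comp measurable_snd).sub (hf.comp measurable_fst)).stronglyMeasurable
  exact (hF.integral_kernel_prod_right' (κ := κ)).measurable

theorem integrableOn_jumpOperator_comp {Q : E → Measure E} (hQ : Measurable Q)
    [∀ y, IsProbabilityMeasure (Q y)] {f : E → ℝ} (hf : Measurable f) {γ : ℝ → E}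
    (hγ : Measurable γ) {S : Set ℝ} {ν : Measure ℝ}
    (h : ∫⁻ u in S, ∫⁻ z, ENNReal.ofReal |f z - f (γ u)| ∂Q (γ u) ∂ν < ⊤) :
    IntegrableOn (fun u => jumpOperator Q f (γ u)) S ν := by
  refine ⟨((measurable_jumpOperator hQ hf).comp hγ).aestronglyMeasurable,
    lt_of_le_of_lt (lintegral_mono fun u => ?_) h⟩
  refine (enorm_integral_le_lintegral_enorm _).trans_eq ?_
  exact lintegral_congr fun z => Real.enorm_eq_ofReal_abs _

end Generator

section Flow

variable {E : Type*} [MeasurableSpace E] {φ : ℝ → E → E} {c : E → EReal} {Λ : E → ℝ → ℝ}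
  {μ : E → Measure ℝ}

theorem restrict_Ioc_flow_eq_map_sub (hΛ : IsAdditiveFunctional φ c Λ)
    (hμ : ∀ (x : E) (u v : ℝ), 0 ≤ u → u ≤ v →
      μ x (Ioc u v) = ENNReal.ofReal (Λ x v - Λ x u))
    {x : E} {s t : ℝ} (hs : 0 ≤ s) (hst : ((s + t : ℝ) : EReal) < c x) :
    (μ (φ s x)).restrict (Ioc 0 t) = ((μ x).restrict (Ioc s (s + t))).map (· - s) := by
  refine Measure.restrict_Ioc_eq_map_sub (fun u v hu huv hvt => ?_)
    (fun u v hu huv _ => hμ _ u v hu huv ▸ ENNReal.ofReal_ne_top)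
  have hadd : ∀ w, 0 ≤ w → w ≤ t → Λ x s + Λ (φ s x) w = Λ x (w + s) := fun w hw hwt => by
    rw [add_comm w s]
    exact hΛ.2.2.2 x s w hs hw (lt_of_le_of_lt (EReal.coe_le_coe_iff.2 (by linarith)) hst)
  rw [hμ _ u v hu huv, hμ x _ _ (by linarith) (by linarith),
    ← hadd u hu (huv.trans hvt), ← hadd v (hu.trans huv) hvt]
  ring_nf

theorem integral_comp_flow_add (hφ : IsSDS φ c) (hΛ : IsAdditiveFunctional φ c Λ)
    (hμ : ∀ (x : E) (u v : ℝ), 0 ≤ u → u ≤ v →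
      μ x (Ioc u v) = ENNReal.ofReal (Λ x v - Λ x u))
    {g : E → ℝ} (hg : Measurable g) {x : E} {s t : ℝ} (hs : 0 ≤ s) (ht : 0 ≤ t)
    (hst : ((s + t : ℝ) : EReal) < c x)
    (hint : IntegrableOn (fun u => g (φ u x)) (Ioc 0 (s + t)) (μ x)) :
    ∫ u in Ioc 0 s, g (φ u x) ∂μ x + ∫ u in Ioc 0 t, g (φ u (φ s x)) ∂μ (φ s x) =
      ∫ u in Ioc 0 (s + t), g (φ u x) ∂μ x := by
  have hpath : ∀ z, Measurable fun u => g (φ u z) := fun z =>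
    hg.comp (hφ.1.comp measurable_prodMk_right)
  have hflow : ∀ r ∈ Ioc s (s + t), φ (r - s) (φ s x) = φ r x := fun r hr => by
    have hr' : ((s + (r - s) : ℝ) : EReal) < c x := by
      rw [add_sub_cancel]
      exact lt_of_le_of_lt (EReal.coe_le_coe_iff.2 hr.2) hst
    rw [hφ.2.2.2.1 x s (r - s) hs (by linarith [hr.1]) hr', add_sub_cancel]
  have hshift : ∫ u in Ioc 0 t, g (φ u (φ s x)) ∂μ (φ s x) =
      ∫ r in Ioc s (s + t), g (φ r x) ∂μ x := by
    rw [restrict_Ioc_flow_eq_map_sub hΛ hμ hs hst,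
      integral_map (measurable_sub_const s).aemeasurable (hpath _).aestronglyMeasurable]
    exact setIntegral_congr_fun measurableSet_Ioc fun r hr => by rw [hflow r hr]
  rw [hshift, ← setIntegral_union (Ioc_disjoint_Ioc_of_le le_rfl) measurableSet_Ioc
      (hint.mono_set (Ioc_subset_Ioc_right (by linarith)))
      (hint.mono_set (Ioc_subset_Ioc_left hs)),
    Ioc_union_Ioc_eq_Ioc hs (by linarith)]

end Flow

theorem stmt_17_general {E : Type*} [MeasurableSpace E]
    (φ : ℝ → E → E) (c : E → EReal) (hSDS : IsSDS φ c)
    (Λ : E → ℝ → ℝ) (hΛ : IsAdditiveFunctional φ c Λ)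
    (μ : E → Measure ℝ)
    (hμ : ∀ (x : E) (u v : ℝ), 0 ≤ u → u ≤ v →
      μ x (Set.Ioc u v) = ENNReal.ofReal (Λ x v - Λ x u))
    (Q : E → Measure E) (hQmeas : Measurable Q)
    (hQprob : ∀ y : E, IsProbabilityMeasure (Q y))
    (f : E → ℝ) (hfmeas : Measurable f)
    (hint : ∀ (x : E) (t : ℝ), 0 ≤ t → (t : EReal) < c x →
      ∫⁻ s in Set.Ioc (0 : ℝ) t,
        (∫⁻ y, ENNReal.ofReal |f y - f (φ s x)| ∂(Q (φ s x))) ∂(μ x) < ⊤)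
    (Af : E → ℝ → ℝ)
    (hAf : ∀ (x : E) (t : ℝ),
      Af x t = f (φ t x) - f x +
        ∫ s in Set.Ioc (0 : ℝ) t, (∫ y, (f y - f (φ s x)) ∂(Q (φ s x))) ∂(μ x)) :
    (∀ x, Af x 0 = 0) ∧
    (∀ (x : E) (s t : ℝ), 0 ≤ s → 0 ≤ t → ((s + t : ℝ) : EReal) < c x →
      Af x s + Af (φ s x) t = Af x (s + t)) := by
  have hAf' : ∀ x t, Af x t =
      f (φ t x) - f x + ∫ u in Ioc 0 t, jumpOperator Q f (φ u x) ∂μ x := hAf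
  refine ⟨fun x => by simp [hAf', hSDS.2.2.1], fun x s t hs ht hst => ?_⟩
  have hjump : IntegrableOn (fun u => jumpOperator Q f (φ u x)) (Ioc 0 (s + t)) (μ x) :=
    integrableOn_jumpOperator_comp hQmeas hfmeas (hSDS.1.comp measurable_prodMk_right)
      (hint x (s + t) (add_nonneg hs ht) hst)
  have hsplit := integral_comp_flow_add hSDS hΛ hμ (measurable_jumpOperator hQmeas hfmeas)
    hs ht hst hjump
  rw [hAf', hAf', hAf', hSDS.2.2.2.1 x s t hs ht hst, ← hsplit]
  ring

theorem stmt_17 {E : Type*} [MeasurableSpace E]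
    (φ : ℝ → E → E) (c : E → EReal) (hSDS : IsSDS φ c)
    (Λ : E → ℝ → ℝ) (hΛ : IsAdditiveFunctional φ c Λ)
    (hmono : ∀ x : E, MonotoneOn (Λ x) (Set.Ici 0))
    (hrc : ∀ (x : E) (t : ℝ), 0 ≤ t → ContinuousWithinAt (Λ x) (Set.Ici t) t)
    (μ : E → Measure ℝ)
    (hμ : ∀ (x : E) (u v : ℝ), 0 ≤ u → u ≤ v →
      μ x (Set.Ioc u v) = ENNReal.ofReal (Λ x v - Λ x u))
    (Q : E → Measure E) (hQmeas : Measurable Q)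
    (hQprob : ∀ y : E, IsProbabilityMeasure (Q y))
    (f : E → ℝ) (hfmeas : Measurable f)
    (hint : ∀ (x : E) (t : ℝ), 0 ≤ t → (t : EReal) < c x →
      ∫⁻ s in Set.Ioc (0 : ℝ) t,
        (∫⁻ y, ENNReal.ofReal |f y - f (φ s x)| ∂(Q (φ s x))) ∂(μ x) < ⊤)
    (Af : E → ℝ → ℝ)
    (hAf : ∀ (x : E) (t : ℝ),
      Af x t = f (φ t x) - f x +
        ∫ s in Set.Ioc (0 : ℝ) t, (∫ y, (f y - f (φ s x)) ∂(Q (φ s x))) ∂(μ x)) :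
    (∀ x, Af x 0 = 0) ∧
    (∀ (x : E) (s t : ℝ), 0 ≤ s → 0 ≤ t → ((s + t : ℝ) : EReal) < c x →
      Af x s + Af (φ s x) t = Af x (s + t)) :=
  stmt_17_general φ c hSDS Λ hΛ μ hμ Q hQmeas hQprob f hfmeas hint Af hAf
end
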